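/- arXiv:2208.12406 — 2 statements merged into one kernel-verified Lean document; each statement's English description precedes it below -/
import Mathlib

section
/- Let q ∈ ℂ[x₁,…,x_d] have degree l with ⟨q⟩ a radical ideal, and let L have lowest-degree nonvanishing monomial of degree l with ker L(D) ∩ ⟨q⟩ = {0}. Then for every polynomial p there exists a unique polynomial f ∈ ker L(D) such that f = p on the variety V(⟨q⟩); moreover deg f equals the minimal degree of any polynomial interpolating p on V(⟨q⟩). -/
open MvPolynomial

/-- The constant-coefficient differential operator `L(D)` obtained from a polynomial `L`
by substituting `∂/∂xⱼ` for `xⱼ`. -/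
noncomputable def diffOp {d : ℕ} (L : MvPolynomial (Fin d) ℂ) :
    MvPolynomial (Fin d) ℂ →ₗ[ℂ] MvPolynomial (Fin d) ℂ :=
  ∑ α ∈ L.support, L.coeff α •
    ((List.finRange d).map
      (fun j => ((pderiv j).toLinearMap : Module.End ℂ (MvPolynomial (Fin d) ℂ)) ^ (α j))).prod

/-- The lowest-degree non-vanishing monomial of `L` has degree `l`. -/
def lowestDegree {d : ℕ} (L : MvPolynomial (Fin d) ℂ) (l : ℕ) : Prop :=
  (∀ k < l, homogeneousComponent k L = 0) ∧ homogeneousComponent l L ≠ 0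

/-! If the lowest-order part of `L` has degree `l`, then `L(D)` lowers total degree by at least
`l`. Restricted to the space `Pₙ` of polynomials of degree `≤ n` (with `n ≥ l`), rank–nullity
gives `dim (ker L(D) ∩ Pₙ) ≥ dim Pₙ - dim Pₙ₋ₗ = dim Pₙ - dim q·Pₙ₋ₗ`; since `ker L(D) ∩ ⟨q⟩ = 0`,
this forces `Pₙ = (ker L(D) ∩ Pₙ) ⊕ q·Pₙ₋ₗ`. Hence every `p` is `f + q h` with `L(D) f = 0` and
`deg f ≤ deg p`. As `⟨q⟩` is radical, the Nullstellensatz turns "agrees with `p` on `V(q)`" into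
"congruent to `p` modulo `q`", so `f` is the only solution interpolating `p`, and decomposing an
arbitrary interpolant `g` in the same way recovers `f`, whence `deg f ≤ deg g`. -/

namespace LinearMap

variable {K V W : Type*} [Field K] [AddCommGroup V] [Module K V] [AddCommGroup W] [Module K W]
  [FiniteDimensional K V] [FiniteDimensional K W]

theorem ker_sup_range_eq_top_of_injective {φ : V →ₗ[K] W} {ψ : W →ₗ[K] V}
    (hψ : Function.Injective ψ) (h : Disjoint (ker φ) (range ψ)) : ker φ ⊔ range ψ = ⊤ := by
  refine Submodule.eq_top_of_disjoint _ _ ?_ h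
  rw [finrank_range_of_inj hψ, ← finrank_range_add_finrank_ker φ, add_comm]
  exact Nat.add_le_add_left (Submodule.finrank_le _) _

end LinearMap

namespace MvPolynomial

variable {σ R : Type*} [CommSemiring R]

variable (σ R) in
noncomputable def degreeLT (n : ℕ) : Submodule R (MvPolynomial σ R) :=
  restrictSupport R {s | s.degree < n}

theorem mem_degreeLT {n : ℕ} {p : MvPolynomial σ R} :
    p ∈ degreeLT σ R n ↔ ∀ s ∈ p.support, s.degree < n :=
  Iff.rfl

theorem degreeLT_zero : degreeLT σ R 0 = ⊥ := by
  simp [degreeLT, restrictSupport, AddMonoidAlgebra.supported, Finsupp.supported_empty]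

theorem degreeLT_succ (n : ℕ) : degreeLT σ R (n + 1) = restrictTotalDegree σ R n := by
  simp only [degreeLT, restrictTotalDegree, Nat.lt_succ_iff]
  rfl

theorem mem_degreeLT_of_totalDegree_lt {n : ℕ} {p : MvPolynomial σ R} (h : p.totalDegree < n) :
    p ∈ degreeLT σ R n :=
  mem_degreeLT.2 fun _ hs => (le_totalDegree hs).trans_lt h

variable (σ R) in
/-- Strict degree bounds make every `T ∈ degreeLowering σ R k` kill the polynomials of degree
`< k` (as `degreeLT σ R 0 = ⊥`), which `deg (T p) ≤ deg p - k` in `ℕ` would not express. -/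
noncomputable def degreeLowering (k : ℕ) : Submodule R (Module.End R (MvPolynomial σ R)) :=
  ⨅ n, (degreeLT σ R (n + k)).compatibleMaps (degreeLT σ R n)

theorem mem_degreeLowering {T : Module.End R (MvPolynomial σ R)} {k : ℕ} :
    T ∈ degreeLowering σ R k ↔ ∀ n, ∀ p ∈ degreeLT σ R (n + k), T p ∈ degreeLT σ R n := by
  simp [degreeLowering, Submodule.compatibleMaps, SetLike.le_def]

theorem degreeLowering_anti : Antitone (degreeLowering σ R) := by
  intro a b hab T hT
  rw [mem_degreeLowering] at hT ⊢
  intro n p hp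
  refine hT n p (restrictSupport_mono R (fun s hs => ?_) hp)
  simp only [Set.mem_ofPred_eq] at hs ⊢
  omega

theorem mul_mem_degreeLowering {S T : Module.End R (MvPolynomial σ R)} {a b : ℕ}
    (hS : S ∈ degreeLowering σ R a) (hT : T ∈ degreeLowering σ R b) :
    S * T ∈ degreeLowering σ R (a + b) := by
  rw [mem_degreeLowering] at hS hT ⊢
  intro n p hp
  exact hS n _ (hT (n + a) p (by rwa [add_assoc]))

theorem pow_mem_degreeLowering {T : Module.End R (MvPolynomial σ R)} {a : ℕ}
    (hT : T ∈ degreeLowering σ R a) (m : ℕ) : T ^ m ∈ degreeLowering σ R (m * a) := by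
  induction m with
  | zero => simp [mem_degreeLowering]
  | succ m ih => simpa [pow_succ, add_mul] using mul_mem_degreeLowering ih hT

theorem list_prod_map_mem_degreeLowering {ι : Type*} (l : List ι)
    {T : ι → Module.End R (MvPolynomial σ R)} {k : ι → ℕ}
    (hT : ∀ i, T i ∈ degreeLowering σ R (k i)) :
    (l.map T).prod ∈ degreeLowering σ R (l.map k).sum := by
  induction l with
  | nil => simp [mem_degreeLowering]
  | cons i l ih => simpa using mul_mem_degreeLowering (hT i) ih

theorem pderiv_mem_degreeLowering (i : σ) :
    (pderiv i).toLinearMap ∈ degreeLowering σ R 1 := by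
  rw [mem_degreeLowering]
  intro n p hp
  rw [p.as_sum, map_sum]
  refine Submodule.sum_mem _ fun s hs => ?_
  simp only [Derivation.coeFn_coe, pderiv_monomial]
  have hs' := mem_degreeLT.1 hp s hs
  rw [degreeLT, monomial_mem_restrictSupport]
  by_cases hsi : s i = 0
  · simp [hsi]
  · have hle : Finsupp.single i 1 ≤ s := Finsupp.single_le_iff.2 (Nat.one_le_iff_ne_zero.2 hsi)
    have hdeg := congrArg Finsupp.degree (tsub_add_cancel_of_le hle)
    rw [map_add, Finsupp.degree_single] at hdeg
    exact Or.inl (by simp only [Set.mem_ofPred_eq]; omega)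

theorem eq_zero_of_mem_degreeLowering {T : Module.End R (MvPolynomial σ R)} {k : ℕ}
    (hT : T ∈ degreeLowering σ R k) {p : MvPolynomial σ R} (hp : p.totalDegree < k) : T p = 0 := by
  have := mem_degreeLowering.1 hT 0 p (by simpa using mem_degreeLT_of_totalDegree_lt hp)
  rwa [degreeLT_zero, Submodule.mem_bot] at this

theorem mem_restrictTotalDegree_sub_of_mem_degreeLowering {T : Module.End R (MvPolynomial σ R)}
    {k n : ℕ} (hT : T ∈ degreeLowering σ R k) (hkn : k ≤ n) {p : MvPolynomial σ R}
    (hp : p ∈ restrictTotalDegree σ R n) : T p ∈ restrictTotalDegree σ R (n - k) := by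
  rw [← degreeLT_succ] at hp ⊢
  exact mem_degreeLowering.1 hT _ p (by rwa [Nat.add_right_comm, Nat.sub_add_cancel hkn])

theorem le_degree_of_homogeneousComponent_eq_zero {L : MvPolynomial σ R} {l : ℕ}
    (hL : ∀ k < l, homogeneousComponent k L = 0) {α : σ →₀ ℕ} (hα : α ∈ L.support) :
    l ≤ α.degree := by
  by_contra! h
  have := congrArg (coeff α) (hL _ h)
  rw [coeff_homogeneousComponent, if_pos rfl, coeff_zero] at this
  exact mem_support_iff.1 hα this

theorem forall_eval_eq_iff_sub_mem {K : Type*} [Field K] [IsAlgClosed K] [Finite σ]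
    {I : Ideal (MvPolynomial σ K)} (hI : I.IsRadical) {f g : MvPolynomial σ K} :
    (∀ x ∈ zeroLocus K I, eval x f = eval x g) ↔ f - g ∈ I := by
  conv_rhs => rw [← hI.radical, ← vanishingIdeal_zeroLocus_eq_radical (K := K),
    mem_vanishingIdeal_iff]
  simp [sub_eq_zero]

theorem exists_ker_sub_mem_span_singleton {σ K : Type*} [Field K] [Finite σ]
    {T : Module.End K (MvPolynomial σ K)} {k : ℕ} (hT : T ∈ degreeLowering σ K k)
    {q : MvPolynomial σ K} (hq0 : q ≠ 0) (hqk : q.totalDegree ≤ k)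
    (hker : ∀ g, T g = 0 → g ∈ Ideal.span {q} → g = 0) (p : MvPolynomial σ K) :
    ∃ f, T f = 0 ∧ f.totalDegree ≤ p.totalDegree ∧ p - f ∈ Ideal.span {q} := by
  obtain hlt | hkn := lt_or_ge p.totalDegree k
  · exact ⟨p, eq_zero_of_mem_degreeLowering hT hlt, le_rfl, by simp⟩
  set n := p.totalDegree
  let φ := T.restrict fun _ => mem_restrictTotalDegree_sub_of_mem_degreeLowering hT hkn
  have hmul : ∀ h ∈ restrictTotalDegree σ K (n - k), q * h ∈ restrictTotalDegree σ K n := by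
    intro h hh
    rw [mem_restrictTotalDegree] at hh ⊢
    have := totalDegree_mul q h
    omega
  let ψ := (LinearMap.mulLeft K q).restrict hmul
  have hψ : Function.Injective ψ := fun a b hab =>
    Subtype.ext (mul_left_cancel₀ hq0 (congrArg Subtype.val hab))
  have hdisj : Disjoint (LinearMap.ker φ) (LinearMap.range ψ) := by
    rw [Submodule.disjoint_def]
    rintro v hv ⟨h, rfl⟩
    exact Subtype.ext (hker _ (congrArg Subtype.val hv)
      (Ideal.mem_span_singleton'.2 ⟨h, mul_comm _ _⟩))
  have hp : (⟨p, (mem_restrictTotalDegree _ _ p).2 le_rfl⟩ : restrictTotalDegree σ K n) ∈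
      LinearMap.ker φ ⊔ LinearMap.range ψ := by
    rw [LinearMap.ker_sup_range_eq_top_of_injective hψ hdisj]; trivial
  obtain ⟨f, hf, _, ⟨h, rfl⟩, hfh⟩ := Submodule.mem_sup.1 hp
  refine ⟨f, congrArg Subtype.val hf, (mem_restrictTotalDegree _ _ _).1 f.2, ?_⟩
  have hpf : (f : MvPolynomial σ K) + q * h = p := congrArg Subtype.val hfh
  rw [← hpf, add_sub_cancel_left]
  exact Ideal.mul_mem_right _ _ (Ideal.mem_span_singleton_self q)

end MvPolynomial

theorem diffOp_mem_degreeLowering {d l : ℕ} {L : MvPolynomial (Fin d) ℂ}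
    (hL : ∀ k < l, homogeneousComponent k L = 0) : diffOp L ∈ degreeLowering (Fin d) ℂ l := by
  refine Submodule.sum_mem _ fun α hα => Submodule.smul_mem _ _ ?_
  refine degreeLowering_anti (le_degree_of_homogeneousComponent_eq_zero hL hα) ?_
  have := list_prod_map_mem_degreeLowering (List.finRange d)
    fun j => pow_mem_degreeLowering (pderiv_mem_degreeLowering (R := ℂ) j) (α j)
  simpa [← Fin.sum_univ_def, ← Finsupp.degree_eq_sum] using this

theorem unique_minimal_degree_pde_interpolant {d l : ℕ} (q : MvPolynomial (Fin d) ℂ)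
    (hq0 : q ≠ 0) (hqdeg : q.totalDegree = l) (hrad : (Ideal.span {q}).IsRadical)
    (L : MvPolynomial (Fin d) ℂ) (hL : lowestDegree L l)
    (hker : ∀ g : MvPolynomial (Fin d) ℂ, diffOp L g = 0 → g ∈ Ideal.span {q} → g = 0)
    (p : MvPolynomial (Fin d) ℂ) :
    ∃ f : MvPolynomial (Fin d) ℂ,
      (diffOp L f = 0 ∧ ∀ x ∈ zeroLocus ℂ (Ideal.span {q}), eval x f = eval x p) ∧
      (∀ g : MvPolynomial (Fin d) ℂ,
        (∀ x ∈ zeroLocus ℂ (Ideal.span {q}), eval x g = eval x p) →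
        f.totalDegree ≤ g.totalDegree) ∧
      (∀ f' : MvPolynomial (Fin d) ℂ, diffOp L f' = 0 →
        (∀ x ∈ zeroLocus ℂ (Ideal.span {q}), eval x f' = eval x p) → f' = f) := by
  simp only [forall_eval_eq_iff_sub_mem hrad]
  have hD := diffOp_mem_degreeLowering hL.1
  obtain ⟨f, hf, -, hpf⟩ := exists_ker_sub_mem_span_singleton hD hq0 hqdeg.le hker p
  have hfp : f - p ∈ Ideal.span {q} := sub_mem_comm_iff.1 hpf
  have huniq : ∀ f', diffOp L f' = 0 → f' - p ∈ Ideal.span {q} → f' = f := fun f' hf' hf'p =>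
    sub_eq_zero.1 (hker _ (by simp [hf, hf']) (by simpa using sub_mem hf'p hfp))
  refine ⟨f, ⟨hf, hfp⟩, fun g hgp => ?_, huniq⟩
  obtain ⟨fg, hfg, hfg_le, hgfg⟩ := exists_ker_sub_mem_span_singleton hD hq0 hqdeg.le hker g
  rw [← huniq fg hfg (by simpa using sub_mem hgp hgfg)]
  exact hfg_le
end

section
/- Let q ∈ ℂ[x₁,…,x_d] be a polynomial of degree l, J = ⟨q⟩, and L = q^∧ its leading form (the degree-l homogeneous part). Then ker L̄(D) ∩ J = {0}, and consequently ℂ[x₁,…,x_d] = ker L̄(D) ⊕ J. -/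
open MvPolynomial

/-- The polynomial with complex-conjugated coefficients. -/
noncomputable def conjPoly {d : ℕ} (L : MvPolynomial (Fin d) ℂ) : MvPolynomial (Fin d) ℂ :=
  MvPolynomial.map (starRingEnd ℂ) L

/-- The Fischer (apolar) pairing `⟨f, L⟩ = L̄(D) f`. -/
noncomputable def fischer {d : ℕ} (f L : MvPolynomial (Fin d) ℂ) : MvPolynomial (Fin d) ℂ :=
  diffOp (conjPoly L) f

/-! If `f = g q` is killed by `L̄(D)`, then so is its top homogeneous part `F = G L`, `G = g^∧`,
because `L̄(D)` lowers the degree of every homogeneous component by exactly `l`. As `P ↦ P̄(D)` is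
multiplicative, `⟨F, F⟩ = Ḡ(D) L̄(D) F = 0`, whereas the constant term of `⟨F, F⟩` is
`∑ α! |F_α|²`. Hence `F = 0` and `f = 0`.

For the complement, `g ↦ L̄(D) (q g)` is an injective endomorphism of the finite-dimensional
space of polynomials of degree `≤ deg f`, hence surjective; so `L̄(D) f = L̄(D) (q g)` for some
`g`, and `f = (f - q g) + q g`. -/

namespace MvPolynomial

variable {σ R : Type*} [CommSemiring R]

theorem pderiv_pow_monomial (j : σ) (k : ℕ) (β : σ →₀ ℕ) (c : R) :
    ((pderiv j).toLinearMap ^ k) (monomial β c) =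
      monomial (β - Finsupp.single j k) ((β j).descFactorial k * c) := by
  induction k with
  | zero => simp
  | succ k ih =>
    rw [pow_succ', Module.End.mul_apply, ih, Derivation.coeFn_coe, pderiv_monomial,
      tsub_tsub, ← Finsupp.single_add, Finsupp.tsub_apply, Finsupp.single_eq_same,
      Nat.descFactorial_succ, Nat.cast_mul]
    congr 1
    ring

theorem commute_pderiv (i j : σ) :
    Commute ((pderiv i).toLinearMap : Module.End R (MvPolynomial σ R)) (pderiv j).toLinearMap := by
  refine linearMap_ext fun s => LinearMap.ext_ring ?_
  simp only [LinearMap.coe_comp, Function.comp_apply, Module.End.mul_apply,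
    Derivation.coeFn_coe, pderiv_monomial, tsub_tsub, add_comm]
  rcases eq_or_ne i j with rfl | hij
  · rfl
  · rw [Finsupp.tsub_apply, Finsupp.tsub_apply, Finsupp.single_eq_of_ne hij,
      Finsupp.single_eq_of_ne hij.symm, tsub_zero, tsub_zero, mul_right_comm]

noncomputable def leadingForm (p : MvPolynomial σ R) : MvPolynomial σ R :=
  homogeneousComponent p.totalDegree p

theorem isHomogeneous_leadingForm (p : MvPolynomial σ R) :
    (leadingForm p).IsHomogeneous p.totalDegree :=
  homogeneousComponent_isHomogeneous _ _

theorem leadingForm_ne_zero {p : MvPolynomial σ R} (hp : p ≠ 0) : leadingForm p ≠ 0 := by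
  obtain ⟨β, hβ, hdeg⟩ := p.support.exists_mem_eq_sup (support_nonempty.mpr hp)
    fun s => s.sum fun _ e => e
  have hβ_deg : β.degree = p.totalDegree := hdeg.symm
  intro h
  have := congrArg (coeff β) h
  rw [leadingForm, coeff_homogeneousComponent, if_pos hβ_deg, coeff_zero] at this
  exact mem_support_iff.mp hβ this

theorem homogeneousComponent_add_mul_of_totalDegree_le {p r : MvPolynomial σ R} {a b : ℕ}
    (hp : p.totalDegree ≤ a) (hr : r.totalDegree ≤ b) :
    homogeneousComponent (a + b) (p * r) =
      homogeneousComponent a p * homogeneousComponent b r := by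
  classical
  ext β
  rw [coeff_homogeneousComponent]
  split_ifs with hβ
  · rw [coeff_mul, coeff_mul]
    refine Finset.sum_congr rfl fun x hx => ?_
    rw [Finset.HasAntidiagonal.mem_antidiagonal] at hx
    rw [← hx, map_add] at hβ
    simp only [coeff_homogeneousComponent]
    rcases trichotomy_of_add_eq_add hβ with h | h | h
    · rw [if_pos h.1, if_pos h.2]
    · have : b < x.2.degree := by omega
      rw [if_neg h.ne, zero_mul, coeff_eq_zero_of_totalDegree_lt (hr.trans_lt this), mul_zero]
    · have : a < x.1.degree := by omega
      rw [if_neg h.ne, mul_zero, coeff_eq_zero_of_totalDegree_lt (hp.trans_lt this), zero_mul]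
  · exact (((homogeneousComponent_isHomogeneous a p).mul
      (homogeneousComponent_isHomogeneous b r)).coeff_eq_zero hβ).symm

theorem leadingForm_mul [NoZeroDivisors R] (p r : MvPolynomial σ R) :
    leadingForm (p * r) = leadingForm p * leadingForm r := by
  rcases eq_or_ne p 0 with rfl | hp
  · simp [leadingForm]
  rcases eq_or_ne r 0 with rfl | hr
  · simp [leadingForm]
  rw [leadingForm, totalDegree_mul_of_isDomain hp hr]
  exact homogeneousComponent_add_mul_of_totalDegree_le le_rfl le_rfl

theorem list_prod_map_pderiv_pow_add (l : List σ) (α β : σ →₀ ℕ) :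
    (l.map fun j => ((pderiv j).toLinearMap : Module.End R (MvPolynomial σ R)) ^ (α + β) j).prod =
      (l.map fun j => (pderiv j).toLinearMap ^ α j).prod *
        (l.map fun j => (pderiv j).toLinearMap ^ β j).prod := by
  induction l with
  | nil => simp
  | cons a t ih =>
    have hcomm : Commute ((pderiv a).toLinearMap ^ β a)
        (t.map fun j => ((pderiv j).toLinearMap : Module.End R (MvPolynomial σ R)) ^ α j).prod :=
      Commute.list_prod_right _ _ fun x hx => by
        obtain ⟨j, -, rfl⟩ := List.mem_map.mp hx
        exact (commute_pderiv a j).pow_pow _ _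
    rw [List.map_cons, List.prod_cons, ih, Finsupp.add_apply, pow_add, List.map_cons,
      List.prod_cons, List.map_cons, List.prod_cons]
    exact hcomm.mul_mul_mul_comm _ _

theorem list_prod_map_pderiv_pow_monomial {l : List σ} (hl : l.Nodup) (α β : σ →₀ ℕ) (c : R) :
    (l.map fun j => ((pderiv j).toLinearMap : Module.End R (MvPolynomial σ R)) ^ α j).prod
        (monomial β c) =
      monomial (β - (l.map fun j => Finsupp.single j (α j)).sum)
        ((l.map fun j => ((β j).descFactorial (α j) : R)).prod * c) := by
  induction l with
  | nil => simp
  | cons a t ih =>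
    obtain ⟨ha, ht⟩ := List.nodup_cons.mp hl
    have hβ : (β - (t.map fun j => Finsupp.single j (α j)).sum) a = β a := by
      rw [Finsupp.tsub_apply, ← Finsupp.applyAddHom_apply (a := a) (g := List.sum _),
        map_list_sum, List.map_map, List.sum_eq_zero, tsub_zero]
      intro x hx
      obtain ⟨j, hj, rfl⟩ := List.mem_map.mp hx
      exact Finsupp.single_eq_of_ne fun h => ha (h ▸ hj)
    simp only [List.map_cons, List.prod_cons, List.sum_cons, Module.End.mul_apply, ih ht,
      pderiv_pow_monomial, hβ, tsub_tsub, add_comm (Finsupp.single a (α a))]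
    congr 1
    ring

end MvPolynomial

section

variable {d : ℕ}

noncomputable def derivMonomial (α : Fin d →₀ ℕ) : Module.End ℂ (MvPolynomial (Fin d) ℂ) :=
  ((List.finRange d).map fun j => (pderiv j).toLinearMap ^ α j).prod

theorem diffOp_eq_sum (L : MvPolynomial (Fin d) ℂ) :
    diffOp L = ∑ α ∈ L.support, L.coeff α • derivMonomial α := rfl

theorem derivMonomial_add (α β : Fin d →₀ ℕ) :
    derivMonomial (α + β) = derivMonomial α * derivMonomial β :=
  list_prod_map_pderiv_pow_add _ α β

theorem derivMonomial_monomial (α β : Fin d →₀ ℕ) (c : ℂ) :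
    derivMonomial α (monomial β c) =
      monomial (β - α) ((∏ j, ((β j).descFactorial (α j) : ℂ)) * c) := by
  rw [derivMonomial, list_prod_map_pderiv_pow_monomial (List.nodup_finRange d),
    ← Fin.sum_univ_def, Finsupp.univ_sum_single, ← Fin.prod_univ_def]

theorem derivMonomial_monomial_of_not_le {α β : Fin d →₀ ℕ} (h : ¬ α ≤ β) (c : ℂ) :
    derivMonomial α (monomial β c) = 0 := by
  obtain ⟨j, hj⟩ : ∃ j, β j < α j := by simpa [Finsupp.le_def] using h
  rw [derivMonomial_monomial, Finset.prod_eq_zero (Finset.mem_univ j)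
    (by rw [Nat.descFactorial_eq_zero_iff_lt.mpr hj, Nat.cast_zero]), zero_mul, monomial_zero]

theorem isHomogeneous_derivMonomial_apply {f : MvPolynomial (Fin d) ℂ} {n : ℕ}
    (hf : f.IsHomogeneous n) (α : Fin d →₀ ℕ) :
    (derivMonomial α f).IsHomogeneous (n - α.degree) := by
  rw [f.as_sum, map_sum]
  refine IsHomogeneous.sum _ _ _ fun β hβ => ?_
  by_cases hαβ : α ≤ β
  · have hβn : n = β.degree := hf.degree_eq_sum_deg_support hβ
    have hsplit : β.degree = (β - α).degree + α.degree := by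
      rw [← map_add, tsub_add_cancel_of_le hαβ]
    rw [derivMonomial_monomial]
    exact isHomogeneous_monomial _ (by omega)
  · rw [derivMonomial_monomial_of_not_le hαβ]
    exact isHomogeneous_zero _ _ _

theorem derivMonomial_apply_eq_zero_of_lt {f : MvPolynomial (Fin d) ℂ} {n : ℕ}
    (hf : f.IsHomogeneous n) {α : Fin d →₀ ℕ} (h : n < α.degree) : derivMonomial α f = 0 := by
  rw [f.as_sum, map_sum]
  refine Finset.sum_eq_zero fun β hβ => derivMonomial_monomial_of_not_le (fun hαβ => ?_) _
  rw [hf.degree_eq_sum_deg_support hβ] at h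
  exact (Finsupp.degree_mono hαβ).not_gt h

theorem diffOp_eq_sum_of_support_subset {L : MvPolynomial (Fin d) ℂ} {s : Finset (Fin d →₀ ℕ)}
    (hs : L.support ⊆ s) : diffOp L = ∑ α ∈ s, L.coeff α • derivMonomial α :=
  Finset.sum_subset hs fun α _ hα => by rw [notMem_support_iff.mp hα, zero_smul]

theorem diffOp_add (A B : MvPolynomial (Fin d) ℂ) : diffOp (A + B) = diffOp A + diffOp B := by
  rw [diffOp_eq_sum_of_support_subset (L := A) Finset.subset_union_left,
    diffOp_eq_sum_of_support_subset (L := B) Finset.subset_union_right,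
    diffOp_eq_sum_of_support_subset (L := A + B) support_add, ← Finset.sum_add_distrib]
  simp only [coeff_add, add_smul]

theorem diffOp_monomial (α : Fin d →₀ ℕ) (c : ℂ) : diffOp (monomial α c) = c • derivMonomial α := by
  rw [diffOp_eq_sum_of_support_subset support_monomial_subset, Finset.sum_singleton,
    coeff_monomial, if_pos rfl]

theorem diffOp_mul (A B : MvPolynomial (Fin d) ℂ) : diffOp (A * B) = diffOp A * diffOp B := by
  induction A using MvPolynomial.induction_on' with
  | monomial α a =>
    induction B using MvPolynomial.induction_on' with
    | monomial β b =>
      rw [monomial_mul, diffOp_monomial, diffOp_monomial, diffOp_monomial, derivMonomial_add,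
        smul_mul_smul_comm]
    | add B C hB hC => rw [mul_add, diffOp_add, diffOp_add, mul_add, hB, hC]
  | add A A' hA hA' => rw [add_mul, diffOp_add, diffOp_add, add_mul, hA, hA']

theorem isHomogeneous_diffOp_apply {L f : MvPolynomial (Fin d) ℂ} {l n : ℕ}
    (hL : L.IsHomogeneous l) (hf : f.IsHomogeneous n) : (diffOp L f).IsHomogeneous (n - l) := by
  rw [diffOp_eq_sum, LinearMap.sum_apply]
  refine IsHomogeneous.sum _ _ _ fun α hα => ?_
  rw [LinearMap.smul_apply, smul_eq_C_mul, hL.degree_eq_sum_deg_support hα]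
  exact (isHomogeneous_derivMonomial_apply hf α).C_mul _

theorem diffOp_apply_eq_zero_of_lt {L f : MvPolynomial (Fin d) ℂ} {l n : ℕ}
    (hL : L.IsHomogeneous l) (hf : f.IsHomogeneous n) (h : n < l) : diffOp L f = 0 := by
  rw [diffOp_eq_sum, LinearMap.sum_apply]
  refine Finset.sum_eq_zero fun α hα => ?_
  rw [hL.degree_eq_sum_deg_support hα] at h
  rw [LinearMap.smul_apply, derivMonomial_apply_eq_zero_of_lt hf h, smul_zero]

theorem homogeneousComponent_diffOp {L : MvPolynomial (Fin d) ℂ} {l n : ℕ}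
    (hL : L.IsHomogeneous l) (hln : l ≤ n) (f : MvPolynomial (Fin d) ℂ) :
    homogeneousComponent (n - l) (diffOp L f) = diffOp L (homogeneousComponent n f) := by
  conv_lhs => rw [← f.sum_homogeneousComponent]
  rw [map_sum, map_sum, Finset.sum_eq_single n]
  · exact homogeneousComponent_eq_self
      (isHomogeneous_diffOp_apply hL (homogeneousComponent_isHomogeneous n f))
  · intro i _ hin
    rcases lt_or_ge i l with hil | hli
    · rw [diffOp_apply_eq_zero_of_lt hL (homogeneousComponent_isHomogeneous i f) hil, map_zero]
    · rw [homogeneousComponent_of_mem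
        (isHomogeneous_diffOp_apply hL (homogeneousComponent_isHomogeneous i f)), if_neg (by omega)]
  · intro hn
    rw [homogeneousComponent_eq_zero n f (by simpa using hn), map_zero, map_zero]

theorem totalDegree_diffOp_le {L : MvPolynomial (Fin d) ℂ} {l : ℕ} (hL : L.IsHomogeneous l)
    (f : MvPolynomial (Fin d) ℂ) : (diffOp L f).totalDegree ≤ f.totalDegree - l := by
  conv_lhs => rw [← f.sum_homogeneousComponent]
  rw [map_sum]
  refine totalDegree_finsetSum_le fun i hi => ?_
  have := (isHomogeneous_diffOp_apply hL (homogeneousComponent_isHomogeneous i f)).totalDegree_le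
  have := Finset.mem_range.mp hi
  omega

theorem coeff_zero_derivMonomial_apply (α : Fin d →₀ ℕ) (f : MvPolynomial (Fin d) ℂ) :
    coeff 0 (derivMonomial α f) = (∏ j, ((α j).factorial : ℂ)) * f.coeff α := by
  induction f using MvPolynomial.induction_on' with
  | monomial β c =>
    by_cases hαβ : α ≤ β
    · rw [derivMonomial_monomial, coeff_monomial, coeff_monomial]
      rcases eq_or_ne β α with rfl | hne
      · simp only [tsub_self, if_true, Nat.descFactorial_self]
      · rw [if_neg (fun h => hne (le_antisymm (tsub_eq_zero_iff_le.mp h) hαβ)), if_neg hne,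
          mul_zero]
    · rw [derivMonomial_monomial_of_not_le hαβ, coeff_zero, coeff_monomial,
        if_neg (fun h => hαβ h.ge), mul_zero]
  | add f g hf hg => rw [map_add, coeff_add, hf, hg, coeff_add, mul_add]

theorem coeff_zero_fischer (f h : MvPolynomial (Fin d) ℂ) :
    coeff 0 (fischer f h) =
      ∑ α ∈ h.support, starRingEnd ℂ (h.coeff α) * ((∏ j, ((α j).factorial : ℂ)) * f.coeff α) := by
  rw [fischer, conjPoly, diffOp_eq_sum, support_map_of_injective _ (RingHom.injective _),
    LinearMap.sum_apply, coeff_sum]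
  simp only [LinearMap.smul_apply, coeff_smul, coeff_map, coeff_zero_derivMonomial_apply,
    smul_eq_mul]

theorem fischer_self_ne_zero {h : MvPolynomial (Fin d) ℂ} (h0 : h ≠ 0) : fischer h h ≠ 0 := by
  have hsum : coeff 0 (fischer h h) =
      ((∑ α ∈ h.support, (∏ j, ((α j).factorial : ℝ)) * Complex.normSq (h.coeff α) : ℝ) : ℂ) := by
    rw [coeff_zero_fischer]
    push_cast
    refine Finset.sum_congr rfl fun α _ => ?_
    rw [← Complex.mul_conj]
    ring
  have hpos : 0 < ∑ α ∈ h.support, (∏ j, ((α j).factorial : ℝ)) * Complex.normSq (h.coeff α) :=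
    Finset.sum_pos (fun α hα => mul_pos (by positivity)
      (Complex.normSq_pos.mpr (mem_support_iff.mp hα))) (support_nonempty.mpr h0)
  intro hzero
  rw [hzero, coeff_zero, eq_comm, Complex.ofReal_eq_zero] at hsum
  exact hpos.ne' hsum

theorem isHomogeneous_conjPoly {L : MvPolynomial (Fin d) ℂ} {l : ℕ} (hL : L.IsHomogeneous l) :
    (conjPoly L).IsHomogeneous l :=
  hL.map _

theorem conjPoly_mul (A B : MvPolynomial (Fin d) ℂ) :
    conjPoly (A * B) = conjPoly A * conjPoly B :=
  map_mul _ A B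

theorem eq_zero_of_diffOp_conjPoly_leadingForm_eq_zero {q f : MvPolynomial (Fin d) ℂ}
    (hf : diffOp (conjPoly (leadingForm q)) f = 0) (hfq : f ∈ Ideal.span {q}) : f = 0 := by
  obtain ⟨g, rfl⟩ := Ideal.mem_span_singleton'.mp hfq
  by_contra hgq
  have hdeg : (g * q).totalDegree = g.totalDegree + q.totalDegree :=
    totalDegree_mul_of_isDomain (left_ne_zero_of_mul hgq) (right_ne_zero_of_mul hgq)
  have hlead : diffOp (conjPoly (leadingForm q)) (leadingForm (g * q)) = 0 := by
    have := homogeneousComponent_diffOp (isHomogeneous_conjPoly (isHomogeneous_leadingForm q))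
      (n := (g * q).totalDegree) (by omega) (g * q)
    rw [hf, map_zero] at this
    exact this.symm
  apply fischer_self_ne_zero (leadingForm_ne_zero hgq)
  rw [fischer, leadingForm_mul g q, conjPoly_mul, diffOp_mul, Module.End.mul_apply,
    ← leadingForm_mul, hlead, map_zero]

theorem exists_diffOp_conjPoly_leadingForm_mul_eq {q : MvPolynomial (Fin d) ℂ} (hq : q ≠ 0)
    (f : MvPolynomial (Fin d) ℂ) :
    ∃ g, diffOp (conjPoly (leadingForm q)) (q * g) = diffOp (conjPoly (leadingForm q)) f := by
  set T := diffOp (conjPoly (leadingForm q))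
  have hT (p : MvPolynomial (Fin d) ℂ) : (T p).totalDegree ≤ p.totalDegree - q.totalDegree :=
    totalDegree_diffOp_le (isHomogeneous_conjPoly (isHomogeneous_leadingForm q)) p
  set V := restrictTotalDegree (Fin d) ℂ f.totalDegree
  have hV : ∀ p ∈ V, (T ∘ₗ LinearMap.mulLeft ℂ q) p ∈ V := fun p hp => by
    rw [mem_restrictTotalDegree] at hp ⊢
    have := hT (q * p)
    have := totalDegree_mul q p
    simp only [LinearMap.coe_comp, Function.comp_apply, LinearMap.mulLeft_apply]
    omega
  have hinj : Function.Injective ((T ∘ₗ LinearMap.mulLeft ℂ q).restrict hV) := by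
    refine (injective_iff_map_eq_zero _).mpr fun p hp => Subtype.ext ?_
    have hqp := eq_zero_of_diffOp_conjPoly_leadingForm_eq_zero (congrArg Subtype.val hp)
      (Ideal.mul_mem_right _ _ (Ideal.mem_span_singleton_self q))
    exact (mul_eq_zero.mp hqp).resolve_left hq
  obtain ⟨g, hg⟩ := LinearMap.injective_iff_surjective.mp hinj
    ⟨T f, by rw [mem_restrictTotalDegree]; exact (hT f).trans tsub_le_self⟩
  exact ⟨g, congrArg Subtype.val hg⟩

end

theorem leading_form_kernel_complements_ideal {d : ℕ} (q : MvPolynomial (Fin d) ℂ)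
    (hq0 : q ≠ 0) (L : MvPolynomial (Fin d) ℂ)
    (hL : L = homogeneousComponent q.totalDegree q) :
    (∀ f : MvPolynomial (Fin d) ℂ,
        diffOp (conjPoly L) f = 0 → f ∈ Ideal.span {q} → f = 0) ∧
    IsCompl (LinearMap.ker (diffOp (conjPoly L))) ((Ideal.span {q}).restrictScalars ℂ) := by
  obtain rfl : L = leadingForm q := hL
  refine ⟨fun _ => eq_zero_of_diffOp_conjPoly_leadingForm_eq_zero,
    Submodule.disjoint_def.mpr fun _ => eq_zero_of_diffOp_conjPoly_leadingForm_eq_zero, ?_⟩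
  refine codisjoint_iff.mpr (Submodule.eq_top_iff'.mpr fun f => ?_)
  obtain ⟨g, hg⟩ := exists_diffOp_conjPoly_leadingForm_mul_eq hq0 f
  refine Submodule.mem_sup.mpr ⟨f - q * g, ?_, q * g, ?_, sub_add_cancel f (q * g)⟩
  · rw [LinearMap.mem_ker, map_sub, hg, sub_self]
  · exact Ideal.mul_mem_right _ _ (Ideal.mem_span_singleton_self q)
end
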